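/- Let α, β ∈ (0,1), let w ∈ ℂ with w ≠ 0, and let t_α, t_β ∈ ℂ be nonzero with t_α² = w(w+α²)(1+α²w) and t_β² = w(w+β²)(1+β²w). Then trace(F_{α,1}(w;t_α)·F_{β,1}(w;t_β)) = 1/2 + g_{α,β}(w), trace(F_{α,2}(w;t_α)·F_{β,2}(w;t_β)) = 1/2 + g_{α,β}(w), trace(F_{α,1}(w;t_α)·F_{β,2}(w;t_β)) = 1/2 − g_{α,β}(w), and trace(F_{α,2}(w;t_α)·F_{β,1}(w;t_β)) = 1/2 − g_{α,β}(w). -/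
import Mathlib


open Matrix Complex

/-- `F_{ε,1}(z;t)`. -/
noncomputable def F1 (ε : ℝ) (z t : ℂ) : Matrix (Fin 2) (Fin 2) ℂ :=
  !![1/2 - z * ((ε : ℂ)^2 - 1) / (2 * t), -((ε : ℂ)^2 * (z + 1)) / (2 * t);
     -(z * (z + 1)) / (2 * t), 1/2 + z * ((ε : ℂ)^2 - 1) / (2 * t)]

/-- `F_{ε,2}(z;t)`. -/
noncomputable def F2 (ε : ℝ) (z t : ℂ) : Matrix (Fin 2) (Fin 2) ℂ :=
  !![1/2 + z * ((ε : ℂ)^2 - 1) / (2 * t), (ε : ℂ)^2 * (z + 1) / (2 * t);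
     z * (z + 1) / (2 * t), 1/2 - z * ((ε : ℂ)^2 - 1) / (2 * t)]

/-- `g_{α,β}(w) = w(2w(1+α²β²)+β²(w²+1)+α²(w²+1))/(4·t_α·t_β)`, with a coherent branch
choice of the square roots `t_α`, `t_β`. -/
noncomputable def gf (α β : ℝ) (w tα tβ : ℂ) : ℂ :=
  w * (2 * w * (1 + (α : ℂ)^2 * (β : ℂ)^2) + (β : ℂ)^2 * (w^2 + 1) + (α : ℂ)^2 * (w^2 + 1))
    / (4 * tα * tβ)

set_option maxHeartbeats 800000 in
/-- Traces of products of the spectral projections: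
`tr(F_{α,1}F_{β,1}) = tr(F_{α,2}F_{β,2}) = 1/2 + g_{α,β}(w)` and
`tr(F_{α,1}F_{β,2}) = tr(F_{α,2}F_{β,1}) = 1/2 − g_{α,β}(w)`. -/
theorem stmt6 (α β : ℝ) (hα : α ∈ Set.Ioo (0 : ℝ) 1) (hβ : β ∈ Set.Ioo (0 : ℝ) 1)
    (w : ℂ) (hw : w ≠ 0) (tα tβ : ℂ) (htα0 : tα ≠ 0) (htβ0 : tβ ≠ 0)
    (htα : tα^2 = w * (w + (α : ℂ)^2) * (1 + (α : ℂ)^2 * w))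
    (htβ : tβ^2 = w * (w + (β : ℂ)^2) * (1 + (β : ℂ)^2 * w)) :
    (F1 α w tα * F1 β w tβ).trace = 1/2 + gf α β w tα tβ ∧
    (F2 α w tα * F2 β w tβ).trace = 1/2 + gf α β w tα tβ ∧
    (F1 α w tα * F2 β w tβ).trace = 1/2 - gf α β w tα tβ ∧
    (F2 α w tα * F1 β w tβ).trace = 1/2 - gf α β w tα tβ := by
  refine ⟨?_, ?_, ?_, ?_⟩ <;>
  · simp only [F1, F2, gf, Matrix.mul_fin_two, Matrix.trace_fin_two_of]
    ring
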